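/- Let I, J ≥ 3, α, β ∈ ℝ, let ε_k, γ_k ∈ ℝ with s_k := 1+2ε_k+γ_k (k = 1,2), and let η₁ : {2,…,I−1} → ℝ and η₂ : {2,…,J−1} → ℝ. Define R₁(2) = s₁ and R₁(i) = s₁ + (η₁(i−1)−ε₁)(η₁(i)+ε₁)/R₁(i−1) for 3 ≤ i ≤ I−1, and R₂(J−1) = s₂ and R₂(j) = s₂ + (η₂(j)−ε₂)(η₂(j+1)+ε₂)/R₂(j+1) for 2 ≤ j ≤ J−2; assume R₁(i) ≠ 0 for 2 ≤ i ≤ I−1, R₂(j) ≠ 0 for 2 ≤ j ≤ J−1, (α+1)R₁(I−1) + (η₁(I−1)−ε₁) ≠ 0, and (β−1)R₂(2) + (η₂(2)+ε₂) ≠ 0. Suppose the error sequences e₁^m ∈ ℝ^I, e₂^m ∈ ℝ^J satisfy, for every m ≥ 1: e₁^m_1 = 0 and e₂^m_J = 0; −(η₁(i)+ε₁)e₁^m_{i−1} + s₁ e₁^m_i + (η₁(i)−ε₁)e₁^m_{i+1} = 0 for 2 ≤ i ≤ I−1; −(η₂(j)+ε₂)e₂^m_{j−1} + s₂ e₂^m_j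 + (η₂(j)−ε₂)e₂^m_{j+1} = 0 for 2 ≤ j ≤ J−1; and the optimized interface conditions (e₁^m_I − e₁^m_{I−1}) + α e₁^m_I = (e₂^{m−1}_2 − e₂^{m−1}_1) + α e₂^{m−1}_2 and (e₂^m_2 − e₂^m_1) + β e₂^m_1 = (e₁^{m−1}_I − e₁^{m−1}_{I−1}) + β e₁^{m−1}_{I−1}. Then, with ρ̄ := −[((α+1)(η₂(2)+ε₂) − R₂(2))·((β−1)(η₁(I−1)−ε₁) − R₁(I−1))] / [((α+1)R₁(I−1) + (η₁(I−1)−ε₁))·((β−1)R₂(2) + (η₂(2)+ε₂))], for every m ≥ 1 one has e₁^{m+2}_i = ρ̄·e₁^m_i for all 1 ≤ i ≤ I and e₂^{m+2}_j = ρ̄·e₂^m_j for all 1 ≤ j ≤ J. -/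

import Mathlib

/-!
Eliminating the tridiagonal system on each grid towards the interface (the Thomas algorithm,
whose pivots are `R₁`, `R₂`) gives `R₁(i) e₁_i = -(η₁(i) - ε₁) e₁_{i+1}` and
`R₂(j) e₂_j = (η₂(j) + ε₂) e₂_{j-1}`. Hence every iterate is the multiple of a fixed profile
determined by its interface value, and the two Robin conditions reduce to a scalar iteration
between `e₁_I` and `e₂_1` whose two-step factor is `ρ̄`.
-/

section Tridiagonal

variable {a b c R e : ℕ → ℝ} {N : ℕ}

theorem forward_elimination (hR₂ : R 2 = b 2)
    (hR : ∀ i, 3 ≤ i → i ≤ N → R i = b i - c (i - 1) * a i / R (i - 1))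
    (hR_ne : ∀ i, 2 ≤ i → i < N → R i ≠ 0) (he₁ : e 1 = 0)
    (he : ∀ i, 2 ≤ i → i ≤ N → a i * e (i - 1) + b i * e i + c i * e (i + 1) = 0) :
    ∀ i, 2 ≤ i → i ≤ N → R i * e i = -c i * e (i + 1) := by
  intro i hi
  induction i, hi using Nat.le_induction with
  | base =>
    intro h2N
    rw [hR₂]
    linear_combination he 2 le_rfl h2N - a 2 * he₁
  | succ i hi ih =>
    intro hiN
    have hRi := hR_ne i hi (by omega)
    have hrow := he (i + 1) (by omega) hiN
    rw [Nat.add_sub_cancel] at hrow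
    rw [hR (i + 1) (by omega) hiN, Nat.add_sub_cancel]
    field_simp
    linear_combination R i * hrow - a (i + 1) * ih (by omega)

theorem backward_elimination (hRN : R N = b N)
    (hR : ∀ j, 2 ≤ j → j < N → R j = b j - c j * a (j + 1) / R (j + 1))
    (hR_ne : ∀ j, 2 < j → j ≤ N → R j ≠ 0) (he : e (N + 1) = 0)
    (heq : ∀ j, 2 ≤ j → j ≤ N → a j * e (j - 1) + b j * e j + c j * e (j + 1) = 0) :
    ∀ j, 2 ≤ j → j ≤ N → R j * e j = -a j * e (j - 1) := by
  intro j h2j hjN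
  induction hjN using Nat.decreasingInduction with
  | self =>
    rw [hRN]
    linear_combination heq N h2j le_rfl - c N * he
  | of_succ j hjN ih =>
    have hRj := hR_ne (j + 1) (by omega) hjN
    have hrow := heq j h2j hjN.le
    rw [hR j h2j hjN]
    field_simp
    have hnext := ih (by omega)
    rw [Nat.add_sub_cancel] at hnext
    linear_combination R (j + 1) * hrow - c j * hnext

variable {d x y : ℕ → ℝ} {ρ : ℝ} {k : ℕ}

theorem eq_const_mul_of_forward_recurrence (hR : ∀ i, k ≤ i → i ≤ N → R i ≠ 0)
    (hx : ∀ i, k ≤ i → i ≤ N → R i * x i = d i * x (i + 1))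
    (hy : ∀ i, k ≤ i → i ≤ N → R i * y i = d i * y (i + 1))
    (hN : x (N + 1) = ρ * y (N + 1)) :
    ∀ i, k ≤ i → i ≤ N + 1 → x i = ρ * y i := by
  intro i hki hiN
  induction hiN using Nat.decreasingInduction with
  | self => exact hN
  | of_succ i hiN ih =>
    have hiN : i ≤ N := Nat.le_of_lt_succ hiN
    apply mul_left_cancel₀ (hR i hki hiN)
    linear_combination hx i hki hiN - ρ * hy i hki hiN + d i * ih (by omega)

theorem eq_const_mul_of_backward_recurrence (hR : ∀ j, k < j → j ≤ N → R j ≠ 0)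
    (hx : ∀ j, k < j → j ≤ N → R j * x j = d j * x (j - 1))
    (hy : ∀ j, k < j → j ≤ N → R j * y j = d j * y (j - 1))
    (hk : x k = ρ * y k) :
    ∀ j, k ≤ j → j ≤ N → x j = ρ * y j := by
  intro j hkj
  induction j, hkj using Nat.le_induction with
  | base => exact fun _ ↦ hk
  | succ j hkj ih =>
    intro hjN
    have hxj := hx (j + 1) (by omega) hjN
    have hyj := hy (j + 1) (by omega) hjN
    rw [Nat.add_sub_cancel] at hxj hyj
    apply mul_left_cancel₀ (hR (j + 1) (by omega) hjN)
    linear_combination hxj - ρ * hyj + d (j + 1) * ih (by omega)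

end Tridiagonal

/-- The paper's `ρ̄`, with `A = R₁(I-1)`, `B = R₂(2)`, `p = η₁(I-1) - ε₁`, `q = η₂(2) + ε₂`. -/
noncomputable def optimizedSchwarzFactor (α β A B p q : ℝ) : ℝ :=
  -(((α + 1) * q - B) * ((β - 1) * p - A)) / (((α + 1) * A + p) * ((β - 1) * B + q))

/-- `u, u'` are the values of the grid-1 iterates at nodes `I, I-1`, and `v, v'` those of the
grid-2 iterates at nodes `1, 2`. -/
theorem interface_two_step {α β A B p q : ℝ} {u u' v v' : ℕ → ℝ} (hA : A ≠ 0) (hB : B ≠ 0)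
    (hden₁ : (α + 1) * A + p ≠ 0) (hden₂ : (β - 1) * B + q ≠ 0)
    (hu : ∀ n, 1 ≤ n → A * u' n = -p * u n) (hv : ∀ n, 1 ≤ n → B * v' n = q * v n)
    (hint₁ : ∀ n, (u (n + 1) - u' (n + 1)) + α * u (n + 1) = (v' n - v n) + α * v' n)
    (hint₂ : ∀ n, (v' (n + 1) - v (n + 1)) + β * v (n + 1) = (u n - u' n) + β * u' n)
    {m : ℕ} (hm : 1 ≤ m) :
    u (m + 2) = optimizedSchwarzFactor α β A B p q * u m ∧
      v (m + 2) = optimizedSchwarzFactor α β A B p q * v m := by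
  have step₁ : ∀ n, 1 ≤ n →
      ((α + 1) * A + p) * B * u (n + 1) = ((α + 1) * q - B) * A * v n := fun n hn ↦ by
    linear_combination A * B * hint₁ n + B * hu (n + 1) (by omega) + (α + 1) * A * hv n hn
  have step₂ : ∀ n, 1 ≤ n →
      ((β - 1) * B + q) * A * v (n + 1) = (A - (β - 1) * p) * B * u n := fun n hn ↦ by
    linear_combination A * B * hint₂ n - A * hv (n + 1) (by omega) + (β - 1) * B * hu n hn
  rw [optimizedSchwarzFactor, div_mul_eq_mul_div, div_mul_eq_mul_div,
    eq_div_iff (mul_ne_zero hden₁ hden₂), eq_div_iff (mul_ne_zero hden₁ hden₂)]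
  constructor
  · apply mul_left_cancel₀ (mul_ne_zero hA hB)
    linear_combination A * ((β - 1) * B + q) * step₁ (m + 1) (by omega)
      + ((α + 1) * q - B) * A * step₂ m hm
  · apply mul_left_cancel₀ (mul_ne_zero hA hB)
    linear_combination B * ((α + 1) * A + p) * step₂ (m + 1) (by omega)
      + (A - (β - 1) * p) * B * step₁ m hm

/-- Contraction factor of the implicit Schwarz iteration with optimized (Robin-type)
interface conditions with parameters `α, β` for two coupled linearized viscous Burgers
equations with reaction terms, with node-dependent frozen advection parameters
`η₁, η₂`. -/
theorem implicit_schwarz_contraction_optimized_burgers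
    (I J : ℕ) (hI : 3 ≤ I) (hJ : 3 ≤ J) (α β : ℝ)
    (ε₁ ε₂ γ₁ γ₂ : ℝ) (η₁ η₂ : ℕ → ℝ)
    (R₁ R₂ : ℕ → ℝ)
    (hR₁base : R₁ 2 = 1 + 2 * ε₁ + γ₁)
    (hR₁rec : ∀ i : ℕ, 3 ≤ i → i ≤ I - 1 →
      R₁ i = 1 + 2 * ε₁ + γ₁ + (η₁ (i - 1) - ε₁) * (η₁ i + ε₁) / R₁ (i - 1))
    (hR₂base : R₂ (J - 1) = 1 + 2 * ε₂ + γ₂)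
    (hR₂rec : ∀ j : ℕ, 2 ≤ j → j ≤ J - 2 →
      R₂ j = 1 + 2 * ε₂ + γ₂ + (η₂ j - ε₂) * (η₂ (j + 1) + ε₂) / R₂ (j + 1))
    (hR₁ne : ∀ i : ℕ, 2 ≤ i → i ≤ I - 1 → R₁ i ≠ 0)
    (hR₂ne : ∀ j : ℕ, 2 ≤ j → j ≤ J - 1 → R₂ j ≠ 0)
    (hden₁ : (α + 1) * R₁ (I - 1) + (η₁ (I - 1) - ε₁) ≠ 0)
    (hden₂ : (β - 1) * R₂ 2 + (η₂ 2 + ε₂) ≠ 0)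
    (e₁ e₂ : ℕ → ℕ → ℝ)
    (hb₁ : ∀ m : ℕ, 1 ≤ m → e₁ m 1 = 0)
    (hb₂ : ∀ m : ℕ, 1 ≤ m → e₂ m J = 0)
    (heq₁ : ∀ m : ℕ, 1 ≤ m → ∀ i : ℕ, 2 ≤ i → i ≤ I - 1 →
      -(η₁ i + ε₁) * e₁ m (i - 1) + (1 + 2 * ε₁ + γ₁) * e₁ m i
        + (η₁ i - ε₁) * e₁ m (i + 1) = 0)
    (heq₂ : ∀ m : ℕ, 1 ≤ m → ∀ j : ℕ, 2 ≤ j → j ≤ J - 1 →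
      -(η₂ j + ε₂) * e₂ m (j - 1) + (1 + 2 * ε₂ + γ₂) * e₂ m j
        + (η₂ j - ε₂) * e₂ m (j + 1) = 0)
    (hint₁ : ∀ m : ℕ,
      (e₁ (m + 1) I - e₁ (m + 1) (I - 1)) + α * e₁ (m + 1) I
        = (e₂ m 2 - e₂ m 1) + α * e₂ m 2)
    (hint₂ : ∀ m : ℕ,
      (e₂ (m + 1) 2 - e₂ (m + 1) 1) + β * e₂ (m + 1) 1
        = (e₁ m I - e₁ m (I - 1)) + β * e₁ m (I - 1)) :
    ∀ m : ℕ, 1 ≤ m →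
      (∀ i : ℕ, 1 ≤ i → i ≤ I →
        e₁ (m + 2) i
          = -(((α + 1) * (η₂ 2 + ε₂) - R₂ 2)
                * ((β - 1) * (η₁ (I - 1) - ε₁) - R₁ (I - 1)))
              / (((α + 1) * R₁ (I - 1) + (η₁ (I - 1) - ε₁))
                * ((β - 1) * R₂ 2 + (η₂ 2 + ε₂)))
              * e₁ m i) ∧
      (∀ j : ℕ, 1 ≤ j → j ≤ J →
        e₂ (m + 2) j
          = -(((α + 1) * (η₂ 2 + ε₂) - R₂ 2)
                * ((β - 1) * (η₁ (I - 1) - ε₁) - R₁ (I - 1)))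
              / (((α + 1) * R₁ (I - 1) + (η₁ (I - 1) - ε₁))
                * ((β - 1) * R₂ 2 + (η₂ 2 + ε₂)))
              * e₂ m j) := by
  intro m hm
  have hI₁ : I - 1 + 1 = I := by omega
  have hJ₁ : J - 1 + 1 = J := by omega
  have elim₁ : ∀ n, 1 ≤ n → ∀ i, 2 ≤ i → i ≤ I - 1 →
      R₁ i * e₁ n i = -(η₁ i - ε₁) * e₁ n (i + 1) := fun n hn ↦
    forward_elimination (a := fun i ↦ -(η₁ i + ε₁)) hR₁base
      (fun i h3 hi ↦ by rw [hR₁rec i h3 hi]; ring) (fun i h2 hi ↦ hR₁ne i h2 hi.le)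
      (hb₁ n hn) (heq₁ n hn)
  have elim₂ : ∀ n, 1 ≤ n → ∀ j, 2 ≤ j → j ≤ J - 1 →
      R₂ j * e₂ n j = (η₂ j + ε₂) * e₂ n (j - 1) := fun n hn ↦ by
    simpa only [neg_neg] using backward_elimination (a := fun j ↦ -(η₂ j + ε₂))
      (c := fun j ↦ η₂ j - ε₂) hR₂base (fun j h2 hj ↦ by rw [hR₂rec j h2 (by omega)]; ring)
      (fun j h2 hj ↦ hR₂ne j h2.le hj) (by rw [hJ₁]; exact hb₂ n hn) (heq₂ n hn)
  obtain ⟨hu, hv⟩ := interface_two_step (u := fun n ↦ e₁ n I) (u' := fun n ↦ e₁ n (I - 1))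
    (v := fun n ↦ e₂ n 1) (v' := fun n ↦ e₂ n 2)
    (hR₁ne (I - 1) (by omega) le_rfl) (hR₂ne 2 le_rfl (by omega)) hden₁ hden₂
    (fun n hn ↦ by simpa only [hI₁] using elim₁ n hn (I - 1) (by omega) le_rfl)
    (elim₂ · · 2 le_rfl (by omega)) hint₁ hint₂ hm
  refine ⟨fun i hi hiI ↦ ?_, fun j hj hjJ ↦ ?_⟩
  · rcases hi.eq_or_lt with rfl | hi
    · rw [hb₁ _ (by omega), hb₁ m hm, mul_zero]
    · exact eq_const_mul_of_forward_recurrence hR₁ne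
        (elim₁ (m + 2) (by omega)) (elim₁ m hm) (by rwa [hI₁]) i hi (by omega)
  · rcases hjJ.eq_or_lt with rfl | hjJ
    · rw [hb₂ _ (by omega), hb₂ m hm, mul_zero]
    · exact eq_const_mul_of_backward_recurrence hR₂ne
        (elim₂ (m + 2) (by omega)) (elim₂ m hm) hv j hj (by omega)
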